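/- arXiv:1506.06837 — 3 statements merged into one kernel-verified Lean document; each statement's English description precedes it below -/
import Mathlib

section
/- For every morphism (α₁,…,αₙ) : ([k],[k],…,[k]) → ([p₁],…,[pₙ]) in the n-fold product of the simplex category in which each αᵢ is an epimorphism (a surjective monotone map), there exists a terminal factorization through a diagonal morphism: an epimorphism β : [k] → [q] and a factorization of (α₁,…,αₙ) through (β,β,…,β) such that every other factorization of (α₁,…,αₙ) through a diagonal of an epimorphism γ : [k] → [r] factors uniquely through (β,…,β) via an epimorphism δ : [r] → [q] with δ∘γ = β. -/
open CategoryTheory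

/-!
Order the tuples `(α₁ x, …, αₙ x)` lexicographically: the map `x ↦ (αᵢ x)ᵢ` stays monotone and
has the same fibers as the tuple `α`, so its corestriction to its (finite, totally ordered) image
is an epimorphism `β : [k] → [q]` whose fibers are exactly the common fibers of the `αᵢ`.
Each `αᵢ` descends along `β`, and `β` itself descends along any diagonal epimorphism `γ`
through which `α` factors, since such a `γ` can only identify points that all `αᵢ` identify.
Uniqueness is cancellation of the epimorphism `γ`.
-/

theorem Monotone.exists_surjective_orderHom_fin {α β : Type*} [Preorder α] [Fintype α]
    [LinearOrder β] {f : α → β} (hf : Monotone f) :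
    ∃ (m : ℕ) (g : α →o Fin m), Function.Surjective g ∧ ∀ x y, g x = g y ↔ f x = f y := by
  set e := (Finset.univ.image f).orderIsoOfFin rfl
  have mem (x : α) : f x ∈ Finset.univ.image f := Finset.mem_image_of_mem f (Finset.mem_univ x)
  refine ⟨_, ⟨fun x => e.symm ⟨f x, mem x⟩,
    fun x y hxy => e.symm.monotone (Subtype.mk_le_mk.2 (hf hxy))⟩, ?_, ?_⟩
  · intro t
    obtain ⟨x, -, hx⟩ := Finset.mem_image.1 (e t).2
    exact ⟨x, e.symm_apply_eq.2 (Subtype.ext hx)⟩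
  · intro x y
    exact e.symm.injective.eq_iff.trans Subtype.mk_eq_mk

theorem OrderHom.exists_comp_eq_of_surjective {α β γ : Type*} [LinearOrder α] [PartialOrder β]
    [Preorder γ] (f : α →o β) (hf : Function.Surjective f) (g : α →o γ)
    (h : ∀ a b, f a = f b → g a = g b) : ∃ g' : β →o γ, g'.comp f = g := by
  refine ⟨⟨fun t => g (Function.surjInv hf t), fun t t' htt' => ?_⟩, ?_⟩
  · set a := Function.surjInv hf t
    set a' := Function.surjInv hf t'
    have ha : f a = t := Function.surjInv_eq hf t
    have ha' : f a' = t' := Function.surjInv_eq hf t'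
    rcases le_total a a' with haa' | ha'a
    · exact g.monotone haa'
    · have : t = t' := le_antisymm htt' (ha' ▸ ha ▸ f.monotone ha'a)
      exact (h a a' (by rw [ha, ha', this])).le
  · ext a
    exact h _ _ (Function.surjInv_eq hf (f a))

theorem SimplexCategory.exists_comp_eq_of_surjective {x y z : SimplexCategory} (f : x ⟶ y)
    (hf : Function.Surjective f.toOrderHom) (g : x ⟶ z)
    (h : ∀ a b, f.toOrderHom a = f.toOrderHom b → g.toOrderHom a = g.toOrderHom b) :
    ∃ g' : y ⟶ z, f ≫ g' = g := by
  obtain ⟨g', hg'⟩ := f.toOrderHom.exists_comp_eq_of_surjective hf g.toOrderHom h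
  exact ⟨SimplexCategory.Hom.mk g', SimplexCategory.Hom.ext _ _ hg'⟩

theorem terminal_factorization_through_diagonal_general
    (n k : ℕ) (p : Fin n → ℕ)
    (α : ∀ i, SimplexCategory.mk k ⟶ SimplexCategory.mk (p i)) :
    ∃ (q : ℕ) (β : SimplexCategory.mk k ⟶ SimplexCategory.mk q)
      (γ : ∀ i, SimplexCategory.mk q ⟶ SimplexCategory.mk (p i)),
      Function.Surjective β.toOrderHom ∧
      (∀ i, α i = β ≫ γ i) ∧
      (∀ (r : ℕ) (γ' : SimplexCategory.mk k ⟶ SimplexCategory.mk r)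
         (δ' : ∀ i, SimplexCategory.mk r ⟶ SimplexCategory.mk (p i)),
         Function.Surjective γ'.toOrderHom →
         (∀ i, α i = γ' ≫ δ' i) →
         ∃! δ : SimplexCategory.mk r ⟶ SimplexCategory.mk q,
           Function.Surjective δ.toOrderHom ∧ γ' ≫ δ = β ∧ ∀ i, δ ≫ γ i = δ' i) := by
  have hjoint : Monotone fun x => toLex fun i => (α i).toOrderHom x :=
    Pi.toLex_monotone.comp fun _ _ hxy i => (α i).toOrderHom.monotone hxy
  obtain ⟨m, β, hβ, hβfib⟩ := hjoint.exists_surjective_orderHom_fin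
  obtain ⟨q, rfl⟩ : ∃ q, m = q + 1 := Nat.exists_eq_succ_of_ne_zero (Fin.pos (β 0)).ne'
  have hfib (x y) : β x = β y ↔ ∀ i, (α i).toOrderHom x = (α i).toOrderHom y := by
    rw [hβfib, toLex_inj, funext_iff]
  choose γ hγ using fun i => SimplexCategory.exists_comp_eq_of_surjective
    (SimplexCategory.mkHom β) hβ (α i) fun x y hxy => (hfib x y).1 hxy i
  refine ⟨q, SimplexCategory.mkHom β, γ, hβ, fun i => (hγ i).symm, fun r γ' δ' hγ' hδ' => ?_⟩
  have : Epi γ' := SimplexCategory.epi_iff_surjective.2 hγ'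
  obtain ⟨δ, hδ⟩ := SimplexCategory.exists_comp_eq_of_surjective γ' hγ' (SimplexCategory.mkHom β)
    fun x y hxy => (hfib x y).2 fun i => by simp [hδ' i, hxy]
  refine ⟨δ, ⟨?_, hδ, fun i => ?_⟩, fun δ₂ ⟨_, hδ₂, _⟩ => ?_⟩
  · refine Function.Surjective.of_comp (g := γ'.toOrderHom) ?_
    rw [← OrderHom.comp_coe, ← SimplexCategory.comp_toOrderHom, hδ]
    exact hβ
  · rw [← cancel_epi γ', ← Category.assoc, hδ, hγ i, hδ' i]
  · rw [← cancel_epi γ', hδ₂, hδ]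

/-- Every n-tuple of epimorphisms `(α₁,…,αₙ) : ([k],…,[k]) → ([p₁],…,[pₙ])`
in `Δⁿ` has a terminal factorization through a diagonal morphism. -/
theorem terminal_factorization_through_diagonal
    (n k : ℕ) (hn : 1 ≤ n) (p : Fin n → ℕ)
    (α : ∀ i, SimplexCategory.mk k ⟶ SimplexCategory.mk (p i))
    (hα : ∀ i, Function.Surjective (α i).toOrderHom) :
    ∃ (q : ℕ) (β : SimplexCategory.mk k ⟶ SimplexCategory.mk q)
      (γ : ∀ i, SimplexCategory.mk q ⟶ SimplexCategory.mk (p i)),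
      Function.Surjective β.toOrderHom ∧
      (∀ i, α i = β ≫ γ i) ∧
      (∀ (r : ℕ) (γ' : SimplexCategory.mk k ⟶ SimplexCategory.mk r)
         (δ' : ∀ i, SimplexCategory.mk r ⟶ SimplexCategory.mk (p i)),
         Function.Surjective γ'.toOrderHom →
         (∀ i, α i = γ' ≫ δ' i) →
         ∃! δ : SimplexCategory.mk r ⟶ SimplexCategory.mk q,
           Function.Surjective δ.toOrderHom ∧ γ' ≫ δ = β ∧ ∀ i, δ ≫ γ i = δ' i) :=
  terminal_factorization_through_diagonal_general n k p α
end

section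
/- If, in a commutative cube of objects of a model category, both the front and back faces are pullback squares, the map of back-right corners B → B′ is a fibration, and the induced map C → C′ ×_{D′} D from the bottom-left corner to the pullback is a fibration, then the induced map of top-left corners A → A′ is a fibration. -/
open CategoryTheory CategoryTheory.Limits

universe v u

/-- A model structure on a complete and cocomplete category, following Quillen: classes
of weak equivalences, fibrations, and cofibrations, satisfying two-out-of-three,
closure under retracts, lifting, and factorization axioms. -/
structure ModelStructure (M : Type u) [Category.{v} M] where
  weq : MorphismProperty M
  fib : MorphismProperty M
  cof : MorphismProperty M
  /-- two out of three -/
  weq_comp : ∀ {X Y Z : M} (f : X ⟶ Y) (g : Y ⟶ Z), weq f → weq g → weq (f ≫ g)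
  weq_of_postcomp : ∀ {X Y Z : M} (f : X ⟶ Y) (g : Y ⟶ Z), weq g → weq (f ≫ g) → weq f
  weq_of_precomp : ∀ {X Y Z : M} (f : X ⟶ Y) (g : Y ⟶ Z), weq f → weq (f ≫ g) → weq g
  /-- closure of the three classes under retracts: if `f` is a retract of `g` in the
  arrow category and `g` is in the class, so is `f`. -/
  retract : ∀ (P : MorphismProperty M), P = weq ∨ P = fib ∨ P = cof →
    ∀ {X Y X' Y' : M} (f : X ⟶ Y) (g : X' ⟶ Y')
      (a : X ⟶ X') (b : X' ⟶ X) (c : Y ⟶ Y') (d : Y' ⟶ Y),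
      a ≫ b = 𝟙 X → c ≫ d = 𝟙 Y → a ≫ g = f ≫ c → g ≫ d = b ≫ f →
      P g → P f
  /-- lifting axioms -/
  lift_cof_weq_fib : ∀ {A B X Y : M} (i : A ⟶ B) (p : X ⟶ Y),
    cof i → weq i → fib p → HasLiftingProperty i p
  lift_cof_fib_weq : ∀ {A B X Y : M} (i : A ⟶ B) (p : X ⟶ Y),
    cof i → fib p → weq p → HasLiftingProperty i p
  /-- factorization axioms -/
  factor_cof_weq : ∀ {X Y : M} (f : X ⟶ Y),
    ∃ (Z : M) (i : X ⟶ Z) (p : Z ⟶ Y), cof i ∧ weq i ∧ fib p ∧ i ≫ p = f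
  factor_fib_weq : ∀ {X Y : M} (f : X ⟶ Y),
    ∃ (Z : M) (i : X ⟶ Z) (p : Z ⟶ Y), cof i ∧ fib p ∧ weq p ∧ i ≫ p = f


/-- Reedy's lemma, dual form: given a commutative cube in a model category
whose back face `A = B ×_D C` and front face `A′ = B′ ×_{D′} C′` are pullback squares,
if `f_B : B → B′` is a fibration and the induced map `C → C′ ×_{D′} D` is a fibration,
then the induced map `f_A : A → A′` is a fibration. -/
theorem reedy_cube_fibration
    {M : Type u} [Category.{v} M] [HasLimits M] [HasColimits M] (ms : ModelStructure M)
    {A B C D A' B' C' D' : M}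
    (f : A ⟶ B) (g : A ⟶ C) (h : B ⟶ D) (k : C ⟶ D)
    (f' : A' ⟶ B') (g' : A' ⟶ C') (h' : B' ⟶ D') (k' : C' ⟶ D')
    (fA : A ⟶ A') (fB : B ⟶ B') (fC : C ⟶ C') (fD : D ⟶ D')
    (w₁ : f ≫ fB = fA ≫ f') (w₂ : g ≫ fC = fA ≫ g')
    (w₃ : h ≫ fD = fB ≫ h') (w₄ : k ≫ fD = fC ≫ k')
    (back : IsPullback f g h k) (front : IsPullback f' g' h' k')
    (hfB : ms.fib fB)
    {P : M} (p₁ : P ⟶ C') (p₂ : P ⟶ D) (hP : IsPullback p₁ p₂ k' fD)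
    (c : C ⟶ P) (hc₁ : c ≫ p₁ = fC) (hc₂ : c ≫ p₂ = k)
    (hcfib : ms.fib c) :
    ms.fib fA := by
  -- Step 1: fA has the RLP against all acyclic cofibrations.
  have rlp : ∀ {X Y : M} (i : X ⟶ Y), ms.cof i → ms.weq i → HasLiftingProperty i fA := by
    intro X Y i hic hiw
    constructor
    intro u v sq
    have sqB : CommSq (u ≫ f) i fB (v ≫ f') := ⟨by
      simp only [Category.assoc]; rw [w₁, reassoc_of% sq.w]⟩
    have : HasLiftingProperty i fB := ms.lift_cof_weq_fib i fB hic hiw hfB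
    let lB := sqB.lift
    have hlB₁ : i ≫ lB = u ≫ f := sqB.fac_left
    have hlB₂ : lB ≫ fB = v ≫ f' := sqB.fac_right
    have wm : (v ≫ g') ≫ k' = (lB ≫ h) ≫ fD := by
      simp only [Category.assoc]; rw [← front.w, w₃, reassoc_of% hlB₂]
    let m : Y ⟶ P := hP.lift (v ≫ g') (lB ≫ h) wm
    have hm₁ : m ≫ p₁ = v ≫ g' := hP.lift_fst _ _ _
    have hm₂ : m ≫ p₂ = lB ≫ h := hP.lift_snd _ _ _
    have sqC : CommSq (u ≫ g) i c m := ⟨by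
      apply hP.hom_ext
      · simp only [Category.assoc]
        rw [hc₁, hm₁, w₂, reassoc_of% sq.w]
      · simp only [Category.assoc]
        rw [hc₂, hm₂, ← back.w, ← reassoc_of% hlB₁]⟩
    have : HasLiftingProperty i c := ms.lift_cof_weq_fib i c hic hiw hcfib
    let lC := sqC.lift
    have hlC₁ : i ≫ lC = u ≫ g := sqC.fac_left
    have hlC₂ : lC ≫ c = m := sqC.fac_right
    have wl : lB ≫ h = lC ≫ k := by
      rw [← hc₂, ← Category.assoc, hlC₂, hm₂]
    refine CommSq.HasLift.mk' ⟨back.lift lB lC wl, ?_, ?_⟩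
    · apply back.hom_ext
      · simp only [Category.assoc]; rw [back.lift_fst, hlB₁]
      · simp only [Category.assoc]; rw [back.lift_snd, hlC₁]
    · apply front.hom_ext
      · simp only [Category.assoc]
        rw [← w₁, reassoc_of% back.lift_fst, hlB₂]
      · simp only [Category.assoc]
        rw [← w₂, reassoc_of% back.lift_snd, ← hc₁, ← Category.assoc, hlC₂, hm₁]
  -- Step 2: retract argument.
  obtain ⟨Z, j, q, hjc, hjw, hqf, hfac⟩ := ms.factor_cof_weq fA
  have : HasLiftingProperty j fA := rlp j hjc hjw
  have sq : CommSq (𝟙 A) j fA q := ⟨by simp [hfac]⟩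
  have ht₁ : j ≫ sq.lift = 𝟙 A := sq.fac_left
  have ht₂ : sq.lift ≫ fA = q := sq.fac_right
  set t := sq.lift
  exact ms.retract ms.fib (Or.inr (Or.inl rfl)) fA q j t (𝟙 A') (𝟙 A')
    ht₁ (Category.id_comp _) (by simp [hfac]) (by simp [ht₂]) hqf
end

section
/- Let X be the cosimplicial simplicial set with X^k the 0-skeleton of Δ[k] (so X^k is the discrete simplicial set on k+1 points), and let L X be its left Kan extension along the diagonal embedding Δ → Δ². Then (L X)^{(1,1)} is the 0-skeleton of Δ[1] × Δ[1], a discrete simplicial set with 4 points; in particular (L X)^{(1,1)} has 4 connected components while X¹ has 2, so the unit map X → diag(L X) is not degreewise a weak homotopy equivalence after applying L in bidegree (1,1) compared to the constant-in-second-variable extension W^{(p,q)} = X^p. -/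
open CategoryTheory CategoryTheory.Limits

/-- The diagonal embedding `D : Δ → Δ²`. -/
def diagEmbedding2 : SimplexCategory ⥤ (Fin 2 → SimplexCategory) :=
  Functor.pi' fun _ => 𝟭 SimplexCategory

/-- The discrete (constant) simplicial set on a type `S`. -/
def discreteSSet (S : Type) : SSet :=
  (Functor.const SimplexCategoryᵒᵖ).obj S

/-- The cosimplicial simplicial set `X` with `X^k` the `0`-skeleton of `Δ[k]`, i.e. the
discrete simplicial set on the `k+1` vertices of `Δ[k]`. -/
def skelZero : SimplexCategory ⥤ SSet where
  obj k := discreteSSet (Fin (k.len + 1))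
  map f := (Functor.const SimplexCategoryᵒᵖ).map (TypeCat.ofHom fun x => f.toOrderHom x)

/-!
An object `j : [k] → p` of the comma category `D ↓ p` (with `D : Δ → Δ^ι` the diagonal) receives,
for every vertex `v` of `[k]`, a map from the vertex object `[0] → p` given by the tuple `(jᵢ v)ᵢ`,
and vertex objects admit no maps between distinct ones. As the diagram is discrete, its colimit is
the discrete simplicial set on `ι`-tuples of vertices: `(L X)^p` is the `0`-skeleton of `∏ᵢ Δ[pᵢ]`.
For `p = ([1], [1])` it has `4` points, while `X¹` has `2`.
-/

def discreteSSet.isoOfEquiv {S T : Type} (e : S ≃ T) : discreteSSet S ≅ discreteSSet T :=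
  (Functor.const SimplexCategoryᵒᵖ).mapIso e.toIso

def discreteSSet.equivOfIso {S T : Type} (e : discreteSSet S ≅ discreteSSet T) : S ≃ T :=
  (e.app (Opposite.op (SimplexCategory.mk 0))).toEquiv

abbrev SimplexCategory.diagonal (ι : Type) : SimplexCategory ⥤ (ι → SimplexCategory) :=
  Functor.pi' fun _ => 𝟭 SimplexCategory

namespace skelZero

variable (ι : Type)

def pi : (ι → SimplexCategory) ⥤ SSet where
  obj p := discreteSSet (∀ i, Fin ((p i).len + 1))
  map f := (Functor.const SimplexCategoryᵒᵖ).map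
    (TypeCat.ofHom fun x i => (f i).toOrderHom (x i))

def toDiagonalPi : skelZero ⟶ SimplexCategory.diagonal ι ⋙ pi ι where
  app k := (Functor.const SimplexCategoryᵒᵖ).map (TypeCat.ofHom fun v _ => v)

variable {ι}

def vertexObj {p : ι → SimplexCategory} (x : ∀ i, Fin ((p i).len + 1)) :
    CostructuredArrow (SimplexCategory.diagonal ι) p :=
  CostructuredArrow.mk (Y := SimplexCategory.mk 0)
    (fun i => SimplexCategory.const _ (p i) (x i))

def vertexHom {p : ι → SimplexCategory} (j : CostructuredArrow (SimplexCategory.diagonal ι) p)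
    (v : Fin (j.left.len + 1)) : vertexObj (fun i => (j.hom i).toOrderHom v) ⟶ j :=
  CostructuredArrow.homMk (SimplexCategory.const _ j.left v) rfl

def isColimitEvaluationMapCoconeAt (p : ι → SimplexCategory) (n : SimplexCategoryᵒᵖ) :
    IsColimit (((evaluation SimplexCategoryᵒᵖ Type).obj n).mapCocone
      ((Functor.LeftExtension.mk (pi ι) (toDiagonalPi ι)).coconeAt p)) where
  desc s := TypeCat.ofHom fun x => s.ι.app (vertexObj x) (0 : Fin 1)
  fac s j := by
    ext v
    exact (ConcreteCategory.congr_hom (s.w (vertexHom j v)) (0 : Fin 1)).symm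
  uniq s m hm := by
    ext x
    exact ConcreteCategory.congr_hom (hm (vertexObj x)) (0 : Fin 1)

variable (ι)

def isPointwiseLeftKanExtension :
    (Functor.LeftExtension.mk (pi ι) (toDiagonalPi ι)).IsPointwiseLeftKanExtension :=
  fun p => evaluationJointlyReflectsColimits _ (isColimitEvaluationMapCoconeAt p)

instance isLeftKanExtension_pi : (pi ι).IsLeftKanExtension (toDiagonalPi ι) :=
  (isPointwiseLeftKanExtension ι).isLeftKanExtension

end skelZero

/-- if `L X` is the left Kan extension of the degreewise `0`-skeleton `X`
of the cosimplicial standard simplex along the diagonal `Δ → Δ²`, then `(L X)^{(1,1)}`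
is a discrete simplicial set with `4` points (the `0`-skeleton of `Δ[1] × Δ[1]`),
whereas `X¹` is discrete with `2` points; in particular the two are not isomorphic. -/
theorem leftKan_skelZero_bidegree_one_one
    (LX : (Fin 2 → SimplexCategory) ⥤ SSet)
    (η : skelZero ⟶ diagEmbedding2 ⋙ LX)
    [LX.IsLeftKanExtension η] :
    Nonempty (LX.obj (fun _ => SimplexCategory.mk 1) ≅ discreteSSet (Fin 4)) ∧
    Nonempty (skelZero.obj (SimplexCategory.mk 1) ≅ discreteSSet (Fin 2)) ∧
    ¬ Nonempty (LX.obj (fun _ => SimplexCategory.mk 1) ≅ skelZero.obj (SimplexCategory.mk 1)) := by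
  -- `diagEmbedding2` is `SimplexCategory.diagonal (Fin 2)` only after unfolding, which instance
  -- search does not do.
  have : (skelZero.pi (Fin 2)).IsLeftKanExtension (L := diagEmbedding2)
      (skelZero.toDiagonalPi (Fin 2)) := skelZero.isLeftKanExtension_pi (Fin 2)
  have e : LX ≅ skelZero.pi (Fin 2) :=
    Functor.leftKanExtensionUnique LX η _ (skelZero.toDiagonalPi (Fin 2))
  have e4 : LX.obj (fun _ => SimplexCategory.mk 1) ≅ discreteSSet (Fin 4) :=
    e.app _ ≪≫ discreteSSet.isoOfEquiv (Fintype.equivFinOfCardEq (by simp))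
  refine ⟨⟨e4⟩, ⟨Iso.refl _⟩, fun ⟨f⟩ => ?_⟩
  simpa using Fintype.card_congr (discreteSSet.equivOfIso (e4.symm ≪≫ f))
end
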